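/- Union and decomposition properties of ≼: (a) if S_i ≼ T_i for all i in a finite index set I, then ⋃_i S_i ≼ ⋃_i T_i; (b) if S ≼ ⋃_{i∈I} T_i, then there exist generalized causal teams S_i with S_i ≼ T_i for each i and S = ⋃_{i∈I} S_i. -/
import Mathlib


namespace CausalTeams

attribute [local instance] Classical.propDecidable

/-- A system of functions over a signature: each endogenous variable `V ∈ En` has a set
of parents `PA V` (not containing `V`) and a function computing its value, which depends
only on the values of its parents. -/
structure FuncSystem (Var : Type) (Val : Var → Type) : Type where
  En : Set Var
  PA : Var → Set Var
  pa_ne : ∀ V, V ∉ PA V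
  fn : ∀ V, (∀ W, Val W) → Val V
  dep_only : ∀ V (s t : ∀ W, Val W), (∀ W ∈ PA V, s W = t W) → fn V s = fn V t

variable {Var : Type} {Val : Var → Type}

/-- Assignments of values to the variables. -/
abbrev Assign (Var : Type) (Val : Var → Type) : Type := ∀ V, Val V

/-- An assignment is compatible with a system of functions if each endogenous variable's
value is the one generated by its function. -/
def Compat (s : Assign Var Val) (F : FuncSystem Var Val) : Prop :=
  ∀ V ∈ F.En, s V = F.fn V s

/-- The endogenous variables whose generating function is constant. -/
def Cn (F : FuncSystem Var Val) : Set Var :=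
  {V | V ∈ F.En ∧ ∀ s t : Assign Var Val, F.fn V s = F.fn V t}

/-- The functions for `V` in `F` and `G` are equivalent up to dummy arguments: they agree
whenever their arguments agree on the common parents of `V`. -/
def fnEquiv (F G : FuncSystem Var Val) (V : Var) : Prop :=
  ∀ s t : Assign Var Val,
    (∀ W, W ∈ F.PA V → W ∈ G.PA V → s W = t W) → F.fn V s = G.fn V t

/-- Equivalence of systems of functions up to dummy arguments. -/
def sysEquiv (F G : FuncSystem Var Val) : Prop :=
  F.En \ Cn F = G.En \ Cn G ∧ ∀ V ∈ F.En \ Cn F, fnEquiv F G V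

/-- The edge relation of the causal graph of `F`. -/
def Edge (F : FuncSystem Var Val) (W V : Var) : Prop := V ∈ F.En ∧ W ∈ F.PA V

/-- `F` is recursive: its causal graph is acyclic. -/
def RecursiveSys (F : FuncSystem Var Val) : Prop :=
  ∀ V, ¬ Relation.TransGen (Edge F) V V

/-- The system of functions resulting from the intervention `do(X = x)`: the variables of
`X` are made exogenous; parents and functions of the remaining endogenous variables are kept. -/
def restrictSys (F : FuncSystem Var Val) (X : Finset Var) : FuncSystem Var Val where
  En := F.En \ ↑X
  PA := F.PA
  pa_ne := F.pa_ne
  fn := F.fn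
  dep_only := F.dep_only

section InterveneAssign
variable [DecidableEq Var] [Fintype Var]

/-- One step of recomputation after the intervention `do(X = x)`. -/
noncomputable def stepFn (F : FuncSystem Var Val) (X : Finset Var) (x : Assign Var Val)
    (s : Assign Var Val) : Assign Var Val :=
  fun V => if V ∈ X then x V else if V ∈ F.En then F.fn V s else s V

/-- The result of the intervention `do(X = x)` on the assignment `s`
(for recursive systems, iterating the recomputation step sufficiently many times
reaches the fixed point). -/
noncomputable def interveneAssign (F : FuncSystem Var Val) (X : Finset Var) (x : Assign Var Val)
    (s : Assign Var Val) : Assign Var Val :=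
  (stepFn F X x)^[Fintype.card Var + 1] s

end InterveneAssign

/-- Formulas: equality atoms `V = v`, dependence atoms `=(Xs; Y)`, negation, conjunction,
tensor disjunction, global disjunction, and interventionist counterfactuals
`X = x □→ φ` (the antecedent is a finite set of variables together with the values
imposed on them, read off from an assignment; such antecedents are always consistent). -/
inductive Formula (Var : Type) (Val : Var → Type) : Type where
  | eq : (V : Var) → Val V → Formula Var Val
  | dep : List Var → Var → Formula Var Val
  | neg : Formula Var Val → Formula Var Val
  | and : Formula Var Val → Formula Var Val → Formula Var Val
  | or : Formula Var Val → Formula Var Val → Formula Var Val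
  | gor : Formula Var Val → Formula Var Val → Formula Var Val
  | cf : Finset Var → Assign Var Val → Formula Var Val → Formula Var Val

/-- CO-formulas: no dependence atoms, no global disjunction. -/
def IsCO : Formula Var Val → Prop
  | .eq _ _ => True
  | .dep _ _ => False
  | .neg φ => IsCO φ
  | .and φ ψ => IsCO φ ∧ IsCO ψ
  | .or φ ψ => IsCO φ ∧ IsCO ψ
  | .gor _ _ => False
  | .cf _ _ φ => IsCO φ

/-- COD-formulas: CO plus dependence atoms; negation applies only to CO-formulas. -/
def IsCOD : Formula Var Val → Prop
  | .eq _ _ => True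
  | .dep _ _ => True
  | .neg φ => IsCO φ
  | .and φ ψ => IsCOD φ ∧ IsCOD ψ
  | .or φ ψ => IsCOD φ ∧ IsCOD ψ
  | .gor _ _ => False
  | .cf _ _ φ => IsCOD φ

/-- CO_⤘-formulas: CO plus global disjunction; negation applies only to CO-formulas. -/
def IsCOglobal : Formula Var Val → Prop
  | .eq _ _ => True
  | .dep _ _ => False
  | .neg φ => IsCO φ
  | .and φ ψ => IsCOglobal φ ∧ IsCOglobal ψ
  | .or φ ψ => IsCOglobal φ ∧ IsCOglobal ψ
  | .gor φ ψ => IsCOglobal φ ∧ IsCOglobal ψ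
  | .cf _ _ φ => IsCOglobal φ

/-- Counterfactual-free formulas: no occurrence of `□→`. -/
def CFFree : Formula Var Val → Prop
  | .eq _ _ => True
  | .dep _ _ => True
  | .neg φ => CFFree φ
  | .and φ ψ => CFFree φ ∧ CFFree ψ
  | .or φ ψ => CFFree φ ∧ CFFree ψ
  | .gor φ ψ => CFFree φ ∧ CFFree ψ
  | .cf _ _ _ => False

section Semantics
variable [DecidableEq Var] [Fintype Var]

/-- Causal team semantics: satisfaction of a formula by a team of assignments together
with a system of functions. -/
noncomputable def csat : FuncSystem Var Val → Set (Assign Var Val) → Formula Var Val → Prop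
  | _, T, .eq V v => ∀ s ∈ T, s V = v
  | _, T, .dep Xs Y => ∀ s ∈ T, ∀ t ∈ T, (∀ W ∈ Xs, s W = t W) → s Y = t Y
  | F, T, .neg φ => ∀ s ∈ T, ¬ csat F {s} φ
  | F, T, .and φ ψ => csat F T φ ∧ csat F T ψ
  | F, T, .or φ ψ => ∃ T₁ T₂, T₁ ∪ T₂ = T ∧ csat F T₁ φ ∧ csat F T₂ ψ
  | F, T, .gor φ ψ => csat F T φ ∨ csat F T ψ
  | F, T, .cf X x φ => csat (restrictSys F X) (interveneAssign F X x '' T) φ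

end Semantics

/-- Generalized causal teams: sets of pairs of an assignment and a system of functions. -/
abbrev GCT (Var : Type) (Val : Var → Type) : Type :=
  Set (Assign Var Val × FuncSystem Var Val)

/-- The team component of a generalized causal team. -/
def teamOf (T : GCT Var Val) : Set (Assign Var Val) := Prod.fst '' T

/-- A genuine (recursive) generalized causal team: all pairs are compatible and all
function components are recursive. -/
def IsGCT (T : GCT Var Val) : Prop := ∀ p ∈ T, Compat p.1 p.2 ∧ RecursiveSys p.2

section GSemantics
variable [DecidableEq Var] [Fintype Var]

/-- Pointwise intervention on a generalized causal team. -/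
noncomputable def gIntervene (T : GCT Var Val) (X : Finset Var) (x : Assign Var Val) : GCT Var Val :=
  (fun p => (interveneAssign p.2 X x p.1, restrictSys p.2 X)) '' T

/-- Generalized causal team semantics. -/
noncomputable def gsat : GCT Var Val → Formula Var Val → Prop
  | T, .eq V v => ∀ p ∈ T, p.1 V = v
  | T, .dep Xs Y => ∀ p ∈ T, ∀ q ∈ T, (∀ W ∈ Xs, p.1 W = q.1 W) → p.1 Y = q.1 Y
  | T, .neg φ => ∀ p ∈ T, ¬ gsat {p} φ
  | T, .and φ ψ => gsat T φ ∧ gsat T ψ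
  | T, .or φ ψ => ∃ T₁ T₂, T₁ ∪ T₂ = T ∧ gsat T₁ φ ∧ gsat T₂ ψ
  | T, .gor φ ψ => gsat T φ ∨ gsat T ψ
  | T, .cf X x φ => gsat (gIntervene T X x) φ

end GSemantics

/-- Equivalence of generalized causal teams: for each system of functions `F`, the
assignments occurring together with a function component `∼`-similar to `F` are the same. -/
def gctEquiv (S T : GCT Var Val) : Prop :=
  ∀ F : FuncSystem Var Val,
    {s | ∃ G, (s, G) ∈ S ∧ sysEquiv G F} = {s | ∃ G, (s, G) ∈ T ∧ sysEquiv G F}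

/-- `S ≼ T` iff `S ≈ R ⊆ T` for some `R`. -/
def sle (S T : GCT Var Val) : Prop := ∃ R : GCT Var Val, gctEquiv S R ∧ R ⊆ T

/-- The generalized causal team generated by a causal team. -/
def toGCT (team : Set (Assign Var Val)) (F : FuncSystem Var Val) : GCT Var Val :=
  (fun s => (s, F)) '' team

/-- Equivalence of elements of generalized causal teams: same assignment and
`∼`-similar function components. -/
def pairEquiv (p q : Assign Var Val × FuncSystem Var Val) : Prop :=
  p.1 = q.1 ∧ sysEquiv p.2 q.2

/-- The quotient `T/≈` has at most `k` elements: `T` is covered by `k` representatives. -/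
def quotCardLE (T : GCT Var Val) (k : ℕ) : Prop :=
  ∃ R : Finset (Assign Var Val × FuncSystem Var Val),
    R.card ≤ k ∧ ∀ p ∈ T, ∃ q ∈ R, pairEquiv p q

section Entailment
variable [DecidableEq Var] [Fintype Var]

/-- Entailment over (recursive) generalized causal teams. -/
def gEntails (Δ : Set (Formula Var Val)) (α : Formula Var Val) : Prop :=
  ∀ T : GCT Var Val, IsGCT T → (∀ γ ∈ Δ, gsat T γ) → gsat T α

/-- Entailment over (recursive) causal teams. -/
def cEntails (Δ : Set (Formula Var Val)) (α : Formula Var Val) : Prop :=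
  ∀ (F : FuncSystem Var Val) (team : Set (Assign Var Val)),
    RecursiveSys F → (∀ s ∈ team, Compat s F) →
    (∀ γ ∈ Δ, csat F team γ) → csat F team α

/-- Causal incompatibility of two formulas. -/
def Incompatible (φ ψ : Formula Var Val) : Prop :=
  ∀ (F G : FuncSystem Var Val) (S T : Set (Assign Var Val)),
    S.Nonempty → T.Nonempty → RecursiveSys F → RecursiveSys G →
    (∀ s ∈ S, Compat s F) → (∀ t ∈ T, Compat t G) →
    csat F S φ → csat G T ψ → ¬ sysEquiv F G

end Entailment

section FormulaHelpers
variable [DecidableEq Var] [Fintype Var] [Nonempty Var]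
  [∀ V, Fintype (Val V)] [∀ V, Nonempty (Val V)]

/-- The falsum formula `⊥ := V = v ∧ V ≠ v`. -/
noncomputable def falsum : Formula Var Val :=
  let V := Classical.arbitrary Var
  Formula.and (Formula.eq V (Classical.arbitrary (Val V)))
    (Formula.neg (Formula.eq V (Classical.arbitrary (Val V))))

/-- Finite conjunction (the empty conjunction is `¬⊥`). -/
noncomputable def bigAnd : List (Formula Var Val) → Formula Var Val
  | [] => Formula.neg falsum
  | [φ] => φ
  | φ :: l => Formula.and φ (bigAnd l)

/-- Finite tensor disjunction (the empty disjunction is `⊥`). -/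
noncomputable def bigOr : List (Formula Var Val) → Formula Var Val
  | [] => falsum
  | [φ] => φ
  | φ :: l => Formula.or φ (bigOr l)

/-- Finite global disjunction (the empty disjunction is `⊥`). -/
noncomputable def bigGor : List (Formula Var Val) → Formula Var Val
  | [] => falsum
  | [φ] => φ
  | φ :: l => Formula.gor φ (bigGor l)

/-- The conjunction `⋀_{V ∈ Dom} V = s(V)` describing the assignment `s`. -/
noncomputable def eqConj (s : Assign Var Val) : Formula Var Val :=
  bigAnd ((Finset.univ : Finset Var).toList.map fun V => Formula.eq V (s V))

/-- `Θ^A := ⋁_{s ∈ A} ⋀_{V ∈ Dom} V = s(V)`. -/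
noncomputable def Theta (A : Finset (Assign Var Val)) : Formula Var Val :=
  bigOr (A.toList.map eqConj)

/-- The constancy atom `=(V)`. -/
def conAtom (V : Var) : Formula Var Val := Formula.dep [] V

/-- `μ := ⋀_{V ∈ Dom} ⋀_{w} (W_V = w □→ =(V))` where `W_V = Dom \ {V}`. -/
noncomputable def muForm : Formula Var Val :=
  bigAnd ((Finset.univ : Finset Var).toList.map fun V =>
    bigAnd (((Finset.univ : Finset (Assign Var Val))).toList.map fun w =>
      Formula.cf ((Finset.univ : Finset Var).erase V) w (conAtom V)))

/-- `χ := μ ∧ ⋀_{V ∈ Dom} =(V)`. -/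
noncomputable def chiForm : Formula Var Val :=
  Formula.and muForm (bigAnd ((Finset.univ : Finset Var).toList.map conAtom))

/-- `χ_k`: the `k`-fold tensor disjunction of `χ` (with `χ_0 := ⊥`). -/
noncomputable def chiK : ℕ → Formula Var Val
  | 0 => falsum
  | 1 => chiForm
  | n + 2 => Formula.or chiForm (chiK (n + 1))

end FormulaHelpers


lemma sysEquiv_refl (F : FuncSystem Var Val) : sysEquiv F F :=
  ⟨rfl, fun V _ s t h => F.dep_only V s t (fun W hW => h W hW hW)⟩

lemma sysEquiv_symm {F G : FuncSystem Var Val} (h : sysEquiv F G) : sysEquiv G F := by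
  refine ⟨h.1.symm, fun V hV s t hst => ?_⟩
  exact (h.2 V (h.1.symm ▸ hV) t s (fun W hF hG => (hst W hG hF).symm)).symm

lemma sysEquiv_trans {F G H : FuncSystem Var Val} (h₁ : sysEquiv F G) (h₂ : sysEquiv G H) :
    sysEquiv F H := by
  refine ⟨h₁.1.trans h₂.1, fun V hV s t hst => ?_⟩
  classical
  set u : Assign Var Val := fun W => if W ∈ F.PA V then s W else t W with hu
  have e1 : F.fn V s = G.fn V u := by
    refine h₁.2 V hV s u (fun W hF _ => ?_)
    simp [hu, hF]
  have e2 : G.fn V u = H.fn V t := by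
    refine h₂.2 V (h₁.1 ▸ hV) u t (fun W hG hH => ?_)
    by_cases hF : W ∈ F.PA V
    · simpa [hu, hF] using hst W hF hH
    · simp [hu, hF]
  exact e1.trans e2

lemma gctEquiv_mem_iff {S R : GCT Var Val} (h : gctEquiv S R) (s : Assign Var Val)
    (F : FuncSystem Var Val) :
    (∃ G, (s, G) ∈ S ∧ sysEquiv G F) ↔ (∃ G, (s, G) ∈ R ∧ sysEquiv G F) :=
  Set.ext_iff.mp (h F) s

/-- union and decomposition properties of ≼:
(a) ≼ is preserved by finite unions; (b) if S ≼ ⋃ᵢ Tᵢ then S decomposes as a union of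
teams Sᵢ ≼ Tᵢ. -/
theorem sle_union_and_decomposition {Var : Type} [Fintype Var] [DecidableEq Var] [Nonempty Var]
    {Val : Var → Type} [∀ V, Fintype (Val V)] [∀ V, Nonempty (Val V)]
    {ι : Type} [Fintype ι] :
    (∀ (S T : ι → GCT Var Val), (∀ i, IsGCT (S i)) → (∀ i, IsGCT (T i)) →
        (∀ i, sle (S i) (T i)) → sle (⋃ i, S i) (⋃ i, T i)) ∧
    (∀ (S : GCT Var Val) (T : ι → GCT Var Val), IsGCT S → (∀ i, IsGCT (T i)) →
        sle S (⋃ i, T i) →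
        ∃ S' : ι → GCT Var Val, (∀ i, IsGCT (S' i)) ∧ (∀ i, sle (S' i) (T i)) ∧
          S = ⋃ i, S' i) := by
  constructor
  · -- (a)
    intro S T hS hT h
    choose R hR hRT using h
    refine ⟨⋃ i, R i, fun F => ?_, Set.iUnion_mono hRT⟩
    ext s
    simp only [Set.mem_setOf_eq, Set.mem_iUnion]
    constructor
    · rintro ⟨G, ⟨i, hGi⟩, hGF⟩
      rcases (gctEquiv_mem_iff (hR i) s F).mp ⟨G, hGi, hGF⟩ with ⟨G', hG', hG'F⟩
      exact ⟨G', ⟨i, hG'⟩, hG'F⟩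
    · rintro ⟨G, ⟨i, hGi⟩, hGF⟩
      rcases (gctEquiv_mem_iff (hR i) s F).mpr ⟨G, hGi, hGF⟩ with ⟨G', hG', hG'F⟩
      exact ⟨G', ⟨i, hG'⟩, hG'F⟩
  · -- (b)
    rintro S T hS hT ⟨R, hSR, hRT⟩
    set S' : ι → GCT Var Val := fun i =>
      {p ∈ S | ∃ H, (p.1, H) ∈ R ∩ T i ∧ sysEquiv H p.2} with hS'
    refine ⟨S', fun i p hp => hS p hp.1, fun i => ?_, ?_⟩
    · -- S' i ≼ T i with witness R ∩ T i
      refine ⟨R ∩ T i, fun F => ?_, Set.inter_subset_right⟩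
      ext s
      simp only [Set.mem_setOf_eq]
      constructor
      · rintro ⟨G, ⟨_, H, hH, hHG⟩, hGF⟩
        exact ⟨H, hH, sysEquiv_trans hHG hGF⟩
      · rintro ⟨H, hH, hHF⟩
        rcases (gctEquiv_mem_iff hSR s H).mpr ⟨H, hH.1, sysEquiv_refl H⟩ with ⟨G, hGS, hGH⟩
        exact ⟨G, ⟨hGS, H, hH, sysEquiv_symm hGH⟩, sysEquiv_trans hGH hHF⟩
    · -- S = ⋃ S' i
      apply Set.eq_of_subset_of_subset
      · rintro ⟨s, G⟩ hp
        rcases (gctEquiv_mem_iff hSR s G).mp ⟨G, hp, sysEquiv_refl G⟩ with ⟨H, hHR, hHG⟩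
        rcases Set.mem_iUnion.mp (hRT hHR) with ⟨i, hi⟩
        exact Set.mem_iUnion.mpr ⟨i, hp, H, ⟨hHR, hi⟩, hHG⟩
      · intro p hp
        rcases Set.mem_iUnion.mp hp with ⟨i, hpi⟩
        exact hpi.1


end CausalTeams
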